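/- arXiv:math/0607233 — 4 statements merged into one kernel-verified Lean document; each statement's English description precedes it below -/
import Mathlib

section
/- Let A ⊆ ℝ^{n_1} and B ⊆ ℝ^{n_2} be Lebesgue-measurable sets with 0 < vol(A) < ∞, and let C ⊆ A × B be a measurable set of finite measure. Then for every integer m ≥ 1, the Lebesgue measure in ℝ^{n_1 + m·n_2} of the set { (a, b_1, …, b_m) ∈ A × B^m : (a, b_i) ∈ C for every 1 ≤ i ≤ m } is at least vol(C)^m / vol(A)^{m−1}. -/
open MeasureTheory Metric Set
open scoped ENNReal

noncomputable section

abbrev Euc (d : ℕ) : Type := EuclideanSpace ℝ (Fin d)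

lemma holder_pow_aux {α : Type*} [MeasurableSpace α] (μ : Measure α)
    {f : α → ℝ≥0∞} (hf : Measurable f) (m : ℕ) (hm : 1 ≤ m) :
    (∫⁻ a, f a ∂μ) ^ m ≤ μ Set.univ ^ (m - 1) * ∫⁻ a, f a ^ m ∂μ := by
  rcases eq_or_lt_of_le hm with h1 | h2
  · simp [← h1]
  · have hp : 1 < (m : ℝ) := by exact_mod_cast h2
    have hpq := Real.HolderConjugate.conjExponent hp
    have key := ENNReal.lintegral_mul_le_Lp_mul_Lq μ hpq hf.aemeasurable
      (aemeasurable_const (b := (1 : ℝ≥0∞)))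
    simp only [Pi.mul_apply, mul_one, one_mul, ENNReal.one_rpow, lintegral_const] at key
    -- raise to power m
    have key2 : (∫⁻ a, f a ∂μ) ^ (m:ℝ) ≤
        ((∫⁻ a, f a ^ (m:ℝ) ∂μ) ^ (1 / (m:ℝ)) * (μ univ) ^ (1 / Real.conjExponent m)) ^ (m:ℝ) :=
      ENNReal.rpow_le_rpow key (by positivity)
    rw [ENNReal.mul_rpow_of_nonneg _ _ (by positivity),
      ← ENNReal.rpow_mul, ← ENNReal.rpow_mul] at key2
    have hm1 : (1 / (m:ℝ)) * m = 1 := by field_simp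
    have hm2 : (1 / Real.conjExponent m) * m = (m:ℝ) - 1 := by
      rw [Real.conjExponent]
      field_simp
    rw [hm1, hm2, ENNReal.rpow_one] at key2
    calc (∫⁻ a, f a ∂μ) ^ m = (∫⁻ a, f a ∂μ) ^ (m:ℝ) := (ENNReal.rpow_natCast _ m).symm
      _ ≤ (∫⁻ a, f a ^ (m:ℝ) ∂μ) * μ univ ^ ((m:ℝ) - 1) := key2
      _ = μ univ ^ (m - 1) * ∫⁻ a, f a ^ m ∂μ := by
          rw [mul_comm]
          congr 1
          · rw [← ENNReal.rpow_natCast (μ univ) (m - 1)]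
            congr 1
            rw [Nat.cast_sub hm, Nat.cast_one]
          · congr 1; ext a; rw [← ENNReal.rpow_natCast (f a) m]

/-- **Pigeonholing via Hölder (Lemma 1.4 (iii)).** If `C ⊆ A × B` is a measurable
incidence set, then the set of `(a, b_1, …, b_m)` with `(a, b_i) ∈ C` for all `i`
has measure at least `vol(C)^m / vol(A)^(m-1)`. -/
theorem pigeonhole_holder (n₁ n₂ : ℕ) (A : Set (Euc n₁)) (B : Set (Euc n₂))
    (hAm : MeasurableSet A) (hBm : MeasurableSet B)
    (hA0 : 0 < volume A) (hAfin : volume A < ⊤)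
    (Cs : Set (Euc n₁ × Euc n₂)) (hCm : MeasurableSet Cs) (hCsub : Cs ⊆ A ×ˢ B)
    (hCfin : volume Cs < ⊤) (m : ℕ) (hm : 1 ≤ m) :
    volume Cs ^ m / volume A ^ (m - 1) ≤
      volume {p : Euc n₁ × (Fin m → Euc n₂) |
        p.1 ∈ A ∧ (∀ i, p.2 i ∈ B) ∧ ∀ i, (p.1, p.2 i) ∈ Cs} := by
  have i0 : Fin m := ⟨0, hm⟩
  set f : Euc n₁ → ℝ≥0∞ := fun a => volume (Prod.mk a ⁻¹' Cs) with hfdef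
  have hfm : Measurable f := measurable_measure_prodMk_left hCm
  set S : Set (Euc n₁ × (Fin m → Euc n₂)) := {p | ∀ i, (p.1, p.2 i) ∈ Cs} with hSdef
  have hSeq : {p : Euc n₁ × (Fin m → Euc n₂) |
      p.1 ∈ A ∧ (∀ i, p.2 i ∈ B) ∧ ∀ i, (p.1, p.2 i) ∈ Cs} = S := by
    ext p
    constructor
    · rintro ⟨-, -, h⟩; exact h
    · intro h
      exact ⟨(hCsub (h i0)).1, fun i => (hCsub (h i)).2, h⟩
  rw [hSeq]
  have hSm : MeasurableSet S := by
    have hSi : S = ⋂ i, (fun p : Euc n₁ × (Fin m → Euc n₂) => (p.1, p.2 i)) ⁻¹' Cs := by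
      ext p; simp [hSdef]
    rw [hSi]
    exact MeasurableSet.iInter fun i =>
      hCm.preimage (measurable_fst.prodMk ((measurable_pi_apply i).comp measurable_snd))
  -- f vanishes off A
  have hf0 : ∀ a ∉ A, f a = 0 := by
    intro a ha
    have hempty : Prod.mk a ⁻¹' Cs = ∅ := by
      ext b
      simp only [mem_preimage, mem_empty_iff_false, iff_false]
      intro hb; exact ha (hCsub hb).1
    simp [hfdef, hempty]
  have hvolS : volume S = ∫⁻ a in A, f a ^ m := by
    rw [Measure.volume_eq_prod, Measure.prod_apply hSm]
    have hslice : ∀ a, Prod.mk a ⁻¹' S = Set.pi univ (fun _ : Fin m => Prod.mk a ⁻¹' Cs) := by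
      intro a; ext y; simp [hSdef, Set.mem_pi]
    have heq : ∀ a, volume (Prod.mk a ⁻¹' S) = f a ^ m := by
      intro a
      rw [hslice, volume_pi_pi]
      simp [hfdef]
    simp only [heq]
    rw [← lintegral_indicator hAm]
    congr 1
    ext a
    by_cases ha : a ∈ A
    · simp [Set.indicator, ha]
    · simp [Set.indicator, ha, hf0 a ha, zero_pow (by omega : m ≠ 0)]
  have hvolC : volume Cs = ∫⁻ a in A, f a := by
    rw [Measure.volume_eq_prod, Measure.prod_apply hCm, ← lintegral_indicator hAm]
    congr 1
    ext a
    by_cases ha : a ∈ A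
    · simp [Set.indicator, ha, hfdef]
    · simp only [Set.indicator, ha, if_false]
      exact hf0 a ha
  rw [hvolS, hvolC]
  have hAe : (volume.restrict A) Set.univ = volume A := by
    simp [Measure.restrict_apply_univ]
  have key := holder_pow_aux (volume.restrict A) hfm m hm
  rw [hAe] at key
  rw [ENNReal.div_le_iff_le_mul (Or.inl (pow_ne_zero _ hA0.ne'))
    (Or.inl (ENNReal.pow_ne_top hAfin.ne))]
  rw [mul_comm]
  exact key

end
end

section
/- Fix an integer d ≥ 2 and constants c > 0, C ≥ 1. There exist K ≥ 1 and ε_0 > 0 such that for every ε ∈ (0,ε_0) there exists δ_0 > 0 with the following property for all δ ∈ (0,δ_0). Let y_1,…,y_d ∈ B(0,1) ⊆ ℝ^d be points in c-general position, and let E ⊆ B(0,10) be a measurable set such that for every ρ ∈ [δ,1] and every ρ-tube T one has vol(E ∩ T) ≤ C·δ^{(d−ε)/2}·ρ^{(d−1)/2}. Then vol({ x ∈ E : there exists r > 0 with ||x − y_j| − r| ≤ δ^{1−ε} for every 1 ≤ j ≤ d }) ≤ δ^{(2d−1)/2 − Kε}. -/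
open MeasureTheory Metric Set
open scoped ENNReal

noncomputable section

/-- The line through `a` with direction `v`. -/
def lineThrough {d : ℕ} (a v : Euc d) : Set (Euc d) :=
  Set.range fun t : ℝ => a + t • v

/-- The `ρ`-tube around the line through `a` with direction `v`: the closed
`ρ`-neighbourhood of the line. -/
def Tube {d : ℕ} (ρ : ℝ) (a v : Euc d) : Set (Euc d) :=
  {x | infDist x (lineThrough a v) ≤ ρ}

/-- The `m`-dimensional volume `|v 1 ∧ ⋯ ∧ v m|` of the parallelepiped spanned by the
vectors `v i`, computed as the square root of the Gram determinant. -/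
def parVol {d m : ℕ} (v : Fin m → Euc d) : ℝ :=
  Real.sqrt (Matrix.det (Matrix.of fun i j : Fin m => (inner ℝ (v i) (v j) : ℝ)))

/-- The difference vectors `y_{i+1} - y_1` of a `d`-tuple of points in `ℝ^d`. -/
def dvec {d : ℕ} (y : Fin d → Euc d) (i : Fin (d - 1)) : Euc d :=
  y ⟨i.val + 1, by have := i.isLt; omega⟩ - y ⟨0, by have := i.isLt; omega⟩

/-- `y_1, …, y_d ∈ ℝ^d` are in `c`-general position:
`|(y_2-y_1) ∧ ⋯ ∧ (y_d-y_1)| ≥ c`. -/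
def GenPos {d : ℕ} (c : ℝ) (y : Fin d → Euc d) : Prop :=
  c ≤ parVol (dvec y)

/-!
Squaring `|x - y_j| ≈ r` and subtracting the equation for `j = 1` linearises the condition:
`2⟪x, y_j - y_1⟫ = |y_j|² - |y_1|² + O(δ^{1-ε})`. Hence for two such points `x, x₀` the difference
`x - x₀` has inner product `O(δ^{1-ε})` with every `y_j - y_1`. These `d - 1` vectors have Gram
determinant at least `c²`, so by Cramer's rule the component of `x - x₀` in their span is
`O(δ^{1-ε})`: all such points lie in one `O(δ^{1-ε})`-tube, around the line through `x₀` normal to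
that span. The tube hypothesis at this radius gives the bound with `K = d`.
-/

namespace Matrix

theorem abs_adjugate_apply_le {n : Type*} [Fintype n] [DecidableEq n]
    {A : Matrix n n ℝ} {B : ℝ} (hB : 1 ≤ B) (hA : ∀ i j, |A i j| ≤ B) (i j : n) :
    |A.adjugate i j| ≤ (Fintype.card n).factorial * B ^ Fintype.card n := by
  have hrow : ∀ k l, |A.updateRow j (Pi.single i 1) k l| ≤ B := by
    intro k l
    rcases eq_or_ne k j with rfl | hk
    · rw [updateRow_self]
      by_cases hl : l = i <;> simp [hl, hB, zero_le_one.trans hB]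
    · rw [updateRow_ne hk]
      exact hA k l
  simpa [adjugate_apply, nsmul_eq_mul] using det_le (abv := AbsoluteValue.abs) hrow

theorem abs_le_of_mulVec_eq {n : Type*} [Fintype n] [DecidableEq n]
    {A : Matrix n n ℝ} {α β : n → ℝ} {B c s : ℝ} (hB : 1 ≤ B) (hA : ∀ i j, |A i j| ≤ B)
    (hc : 0 < c) (hdet : c ≤ A.det) (hAα : A *ᵥ α = β) (hβ : ∀ j, |β j| ≤ s) (i : n) :
    |α i| ≤ Fintype.card n * (Fintype.card n).factorial * B ^ Fintype.card n * s / c := by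
  set N := Fintype.card n
  have hbound : 0 ≤ (N.factorial : ℝ) * B ^ N := by have := zero_le_one.trans hB; positivity
  have hs : 0 ≤ s := (abs_nonneg _).trans (hβ i)
  have hcramer : A.det * α i = (A.adjugate *ᵥ β) i := by
    rw [← hAα, mulVec_mulVec, adjugate_mul, smul_mulVec, one_mulVec, Pi.smul_apply, smul_eq_mul]
  have hsum : |(A.adjugate *ᵥ β) i| ≤ N * ((N.factorial : ℝ) * B ^ N * s) := by
    calc |(A.adjugate *ᵥ β) i| ≤ ∑ j, |A.adjugate i j| * |β j| := by
          simpa only [mulVec, dotProduct, abs_mul] using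
            Finset.abs_sum_le_sum_abs (fun j => A.adjugate i j * β j) Finset.univ
      _ ≤ ∑ _j : n, (N.factorial : ℝ) * B ^ N * s := Finset.sum_le_sum fun j _ =>
          mul_le_mul (A.abs_adjugate_apply_le hB hA i j) (hβ j) (abs_nonneg _) hbound
      _ = N * ((N.factorial : ℝ) * B ^ N * s) := by simp [N]
  have hdet_pos : 0 < A.det := hc.trans_le hdet
  calc |α i| = |(A.adjugate *ᵥ β) i| / A.det := by
        rw [← hcramer, abs_mul, abs_of_pos hdet_pos]; field_simp
    _ ≤ N * ((N.factorial : ℝ) * B ^ N * s) / c := by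
        apply div_le_div₀ (by positivity) hsum hc hdet
    _ = _ := by ring

end Matrix

theorem abs_sq_dist_sub_sq_dist_le {X : Type*} [PseudoMetricSpace X] {x a b : X} {r w R : ℝ}
    (ha : |dist x a - r| ≤ w) (hb : |dist x b - r| ≤ w) (hRa : dist x a ≤ R) (hRb : dist x b ≤ R) :
    |dist x a ^ 2 - dist x b ^ 2| ≤ 4 * R * w := by
  have hab : |dist x a - dist x b| ≤ 2 * w := by
    rw [abs_le] at ha hb ⊢; constructor <;> linarith
  have hsum : |dist x a + dist x b| ≤ 2 * R := by
    rw [abs_of_nonneg (by positivity)]; linarith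
  calc |dist x a ^ 2 - dist x b ^ 2| = |dist x a - dist x b| * |dist x a + dist x b| := by
        rw [← abs_mul]; ring_nf
    _ ≤ 2 * w * (2 * R) := mul_le_mul hab hsum (abs_nonneg _) ((abs_nonneg _).trans hab)
    _ = 4 * R * w := by ring

section InnerProductSpace

variable {E : Type*} [NormedAddCommGroup E] [InnerProductSpace ℝ E]

open Matrix Submodule Module

theorem norm_sq_le_of_abs_inner_le {n : Type*} [Fintype n] [DecidableEq n] {v : n → E} {p : E}
    {R c s : ℝ} (hR : 1 ≤ R) (hv : ∀ i, ‖v i‖ ≤ R) (hc : 0 < c) (hdet : c ≤ (gram ℝ v).det)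
    (hp : p ∈ span ℝ (Set.range v)) (hs : ∀ i, |inner ℝ p (v i)| ≤ s) :
    ‖p‖ ^ 2 ≤
      Fintype.card n ^ 2 * (Fintype.card n).factorial * R ^ (2 * Fintype.card n) * s ^ 2 / c := by
  set N := Fintype.card n
  obtain ⟨α, rfl⟩ := (mem_span_range_iff_exists_fun ℝ).1 hp
  set β : n → ℝ := fun i => inner ℝ (v i) (∑ j, α j • v j)
  have hβ : ∀ i, |β i| ≤ s := fun i => by simpa only [β, real_inner_comm] using hs i
  have hgram : gram ℝ v *ᵥ α = β := by
    ext i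
    simp only [mulVec, dotProduct, gram_apply, β, inner_sum, real_inner_smul_right, mul_comm]
  have hentry : ∀ i j, |gram ℝ v i j| ≤ R ^ 2 := fun i j => by
    rw [gram_apply, sq]
    exact (abs_real_inner_le_norm _ _).trans
      (mul_le_mul (hv i) (hv j) (norm_nonneg _) (zero_le_one.trans hR))
  have hα := abs_le_of_mulVec_eq (one_le_pow₀ hR) hentry hc hdet hgram hβ
  set A := (N : ℝ) * N.factorial * (R ^ 2) ^ N * s / c
  calc ‖∑ j, α j • v j‖ ^ 2 = ∑ i, α i * β i := by
        rw [← real_inner_self_eq_norm_sq, sum_inner]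
        simp only [real_inner_smul_left, β]
    _ ≤ ∑ _i : n, A * s := Finset.sum_le_sum fun i _ =>
        (le_abs_self _).trans <| abs_mul (α i) (β i) ▸
          mul_le_mul (hα i) (hβ i) (abs_nonneg _) ((abs_nonneg _).trans (hα i))
    _ = _ := by simp only [Finset.sum_const, Finset.card_univ, nsmul_eq_mul, A]; ring

theorem Submodule.exists_ne_zero_forall_mem_orthogonal_eq_smul [FiniteDimensional ℝ E]
    (K : Submodule ℝ E) (hK : finrank ℝ K + 1 = finrank ℝ E) :
    ∃ u : E, u ≠ 0 ∧ ∀ q ∈ Kᗮ, ∃ t : ℝ, t • u = q := by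
  obtain ⟨u, hu, hspan⟩ := finrank_eq_one_iff'.1 (finrank_add_finrank_orthogonal' hK)
  refine ⟨u, by simpa using hu, fun q hq => ?_⟩
  obtain ⟨t, ht⟩ := hspan ⟨q, hq⟩
  exact ⟨t, congrArg Subtype.val ht⟩

theorem exists_ne_zero_forall_norm_sub_smul_sq_le [FiniteDimensional ℝ E] {n : Type*} [Fintype n]
    [DecidableEq n] (hn : Fintype.card n + 1 = finrank ℝ E) {v : n → E} {R c : ℝ} (hR : 1 ≤ R)
    (hv : ∀ i, ‖v i‖ ≤ R) (hc : 0 < c) (hdet : c ≤ (gram ℝ v).det) :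
    ∃ u : E, u ≠ 0 ∧ ∀ (p : E) (s : ℝ), (∀ i, |inner ℝ p (v i)| ≤ s) → ∃ t : ℝ,
      ‖p - t • u‖ ^ 2 ≤
        Fintype.card n ^ 2 * (Fintype.card n).factorial * R ^ (2 * Fintype.card n) * s ^ 2 / c := by
  set V := span ℝ (Set.range v)
  have hV : finrank ℝ V + 1 = finrank ℝ E := by
    rwa [finrank_span_eq_card (linearIndependent_of_det_gram_ne_zero (hc.trans_le hdet).ne')]
  obtain ⟨u, hu, hperp⟩ := V.exists_ne_zero_forall_mem_orthogonal_eq_smul hV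
  refine ⟨u, hu, fun p s hs => ?_⟩
  obtain ⟨t, ht⟩ := hperp _ (V.sub_starProjection_mem_orthogonal p)
  have hproj : p - t • u = V.starProjection p := by rw [ht]; abel
  refine ⟨t, hproj ▸ norm_sq_le_of_abs_inner_le hR hv hc hdet (V.starProjection_apply_mem p)
    fun i => ?_⟩
  have horth := V.starProjection_inner_eq_zero p (v i) (subset_span (Set.mem_range_self i))
  rw [inner_sub_left, sub_eq_zero] at horth
  exact horth ▸ hs i

theorem two_mul_inner_sub_eq (x x' a b : E) :
    2 * inner ℝ (x - x') (a - b) =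
      (dist x' a ^ 2 - dist x' b ^ 2) - (dist x a ^ 2 - dist x b ^ 2) := by
  simp only [dist_eq_norm, norm_sub_sq_real, inner_sub_left, inner_sub_right]
  ring

theorem abs_inner_sub_le_of_almost_equidistant {ι : Type*} {y : ι → E} {x x' : E}
    {r r' w R : ℝ} (hx : ∀ j, |dist x (y j) - r| ≤ w) (hx' : ∀ j, |dist x' (y j) - r'| ≤ w)
    (hRx : ∀ j, dist x (y j) ≤ R) (hRx' : ∀ j, dist x' (y j) ≤ R) (j k : ι) :
    |inner ℝ (x - x') (y j - y k)| ≤ 4 * R * w := by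
  have h := abs_sq_dist_sub_sq_dist_le (hx j) (hx k) (hRx j) (hRx k)
  have h' := abs_sq_dist_sub_sq_dist_le (hx' j) (hx' k) (hRx' j) (hRx' k)
  have h2 := two_mul_inner_sub_eq x x' (y j) (y k)
  rw [abs_le] at h h' ⊢
  constructor <;> linarith

end InnerProductSpace

section Euclidean

open Matrix

theorem norm_dvec_le {d : ℕ} {y : Fin d → Euc d} (hy : ∀ j, ‖y j‖ ≤ 1) (i : Fin (d - 1)) :
    ‖dvec y i‖ ≤ 2 :=
  (norm_sub_le _ _).trans <| (add_le_add (hy _) (hy _)).trans_eq one_add_one_eq_two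

theorem GenPos.sq_le_det_gram {d : ℕ} {c : ℝ} {y : Fin d → Euc d} (hc : 0 < c)
    (h : GenPos c y) :
    c ^ 2 ≤ (gram ℝ (dvec y)).det :=
  (Real.le_sqrt' hc).1 h

theorem exists_subset_tube_of_almost_equidistant {d : ℕ} (hd : 1 ≤ d) {c : ℝ} (hc : 0 < c) :
    ∃ M : ℝ, 1 ≤ M ∧ ∀ (w : ℝ) (y : Fin d → Euc d) (S : Set (Euc d)), 0 ≤ w →
      (∀ j, ‖y j‖ ≤ 1) → GenPos c y → S ⊆ closedBall 0 10 →
      (∀ x ∈ S, ∃ r, ∀ j, |dist x (y j) - r| ≤ w) →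
      ∃ a u : Euc d, u ≠ 0 ∧ S ⊆ Tube (M * w) a u := by
  set N := d - 1
  set D : ℝ := N ^ 2 * N.factorial * 2 ^ (2 * N) / c ^ 2
  refine ⟨max 1 (44 * √D), le_max_left _ _, fun w y S hw hy hgp hS hequi => ?_⟩
  obtain ⟨u, hu, hline⟩ := exists_ne_zero_forall_norm_sub_smul_sq_le (v := dvec y)
    (by simp only [Fintype.card_fin, finrank_euclideanSpace_fin]; omega) one_le_two
    (norm_dvec_le hy) (by positivity) (hgp.sq_le_det_gram hc)
  rcases S.eq_empty_or_nonempty with rfl | ⟨x₀, hx₀⟩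
  · exact ⟨0, u, hu, empty_subset _⟩
  refine ⟨x₀, u, hu, fun x hx => ?_⟩
  have hdist : ∀ z ∈ S, ∀ j, dist z (y j) ≤ 11 := fun z hz j => by
    linarith [dist_le_norm_add_norm z (y j), hy j, mem_closedBall_zero_iff.1 (hS hz)]
  obtain ⟨r, hr⟩ := hequi x hx
  obtain ⟨r₀, hr₀⟩ := hequi x₀ hx₀
  obtain ⟨t, ht⟩ := hline (x - x₀) (4 * 11 * w) fun i =>
    abs_inner_sub_le_of_almost_equidistant hr hr₀ (hdist x hx) (hdist x₀ hx₀) _ _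
  have hnorm : ‖x - x₀ - t • u‖ ≤ √D * (44 * w) := by
    rw [← Real.sqrt_sq (by positivity : 0 ≤ 44 * w), ← Real.sqrt_mul' _ (by positivity),
      Real.le_sqrt (norm_nonneg _) (by positivity)]
    simp only [Fintype.card_fin] at ht
    convert ht using 1
    simp only [D, N]
    ring
  calc infDist x (lineThrough x₀ u) ≤ dist x (x₀ + t • u) := infDist_le_dist_of_mem ⟨t, rfl⟩
    _ = ‖x - x₀ - t • u‖ := by rw [dist_eq_norm, sub_add_eq_sub_sub]
    _ ≤ √D * (44 * w) := hnorm
    _ ≤ max 1 (44 * √D) * w := by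
        rw [← mul_assoc, mul_comm _ 44]
        exact mul_le_mul_of_nonneg_right (le_max_right _ _) hw

end Euclidean

section Exponents

theorem mul_rpow_le_one_of_le_inv_rpow_inv {X a δ : ℝ} (hX : 0 < X) (ha : 0 < a) (hδ : 0 ≤ δ)
    (h : δ ≤ X⁻¹ ^ a⁻¹) : X * δ ^ a ≤ 1 :=
  calc X * δ ^ a ≤ X * X⁻¹ := mul_le_mul_of_nonneg_left
        ((Real.le_rpow_inv_iff_of_pos hδ (inv_nonneg.2 hX.le) ha).1 h) hX.le
    _ = 1 := mul_inv_cancel₀ hX.ne'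

theorem mul_rpow_one_sub_mem_Icc {M δ ε : ℝ} (hM : 1 ≤ M) (hδ : 0 < δ) (hε : 0 ≤ ε)
    (hε' : ε ≤ 1 / 2) (hδM : δ ≤ M⁻¹ ^ (1 / 2 : ℝ)⁻¹) :
    M * δ ^ (1 - ε) ∈ Set.Icc δ 1 := by
  have hδ1 : δ ≤ 1 :=
    hδM.trans (Real.rpow_le_one (by positivity) (inv_le_one_of_one_le₀ hM) (by norm_num))
  constructor
  · calc δ = δ ^ (1 : ℝ) := (Real.rpow_one δ).symm
      _ ≤ δ ^ (1 - ε) := Real.rpow_le_rpow_of_exponent_ge hδ hδ1 (by linarith)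
      _ ≤ M * δ ^ (1 - ε) := le_mul_of_one_le_left (by positivity) hM
  · calc M * δ ^ (1 - ε) ≤ M * δ ^ (1 / 2 : ℝ) := mul_le_mul_of_nonneg_left
          (Real.rpow_le_rpow_of_exponent_ge hδ hδ1 (by linarith)) (by linarith)
      _ ≤ 1 := mul_rpow_le_one_of_le_inv_rpow_inv (by linarith) (by norm_num) hδ.le hδM

theorem tube_bound_le_rpow {d ε δ C M : ℝ} (hC : 0 < C) (hM : 0 < M) (hdε : 0 < d * ε)
    (hδ : 0 < δ) (hδ₀ : δ ≤ (C * M ^ ((d - 1) / 2))⁻¹ ^ (d * ε / 2)⁻¹) :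
    C * δ ^ ((d - ε) / 2) * (M * δ ^ (1 - ε)) ^ ((d - 1) / 2) ≤
      δ ^ ((2 * d - 1) / 2 - d * ε) := by
  set X := C * M ^ ((d - 1) / 2)
  calc C * δ ^ ((d - ε) / 2) * (M * δ ^ (1 - ε)) ^ ((d - 1) / 2)
        = X * (δ ^ ((d - ε) / 2) * δ ^ ((1 - ε) * ((d - 1) / 2))) := by
          rw [Real.mul_rpow hM.le (by positivity), ← Real.rpow_mul hδ.le]; ring
    _ = X * (δ ^ (d * ε / 2) * δ ^ ((2 * d - 1) / 2 - d * ε)) := by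
          rw [← Real.rpow_add hδ, ← Real.rpow_add hδ]; ring_nf
    _ = X * δ ^ (d * ε / 2) * δ ^ ((2 * d - 1) / 2 - d * ε) := by ring
    _ ≤ 1 * δ ^ ((2 * d - 1) / 2 - d * ε) := mul_le_mul_of_nonneg_right
          (mul_rpow_le_one_of_le_inv_rpow_inv (by positivity) (by positivity) hδ.le hδ₀)
          (by positivity)
    _ = δ ^ ((2 * d - 1) / 2 - d * ε) := one_mul _

end Exponents

/-- **Nondegeneracy of lines (Lemma 1.7 (i)).** The set of points essentially equidistant
from a fixed `d`-tuple in general position is contained in a thin tube, hence has small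
measure in a set with good tube bounds. -/
theorem nondegeneracy_of_lines_i (d : ℕ) (hd : 2 ≤ d) (c C : ℝ) (hc : 0 < c) (hC : 1 ≤ C) :
    ∃ K : ℝ, 1 ≤ K ∧ ∃ ε₀ : ℝ, 0 < ε₀ ∧ ∀ ε : ℝ, 0 < ε → ε < ε₀ →
      ∃ δ₀ : ℝ, 0 < δ₀ ∧ ∀ δ : ℝ, 0 < δ → δ < δ₀ →
      ∀ (y : Fin d → Euc d) (E : Set (Euc d)),
        (∀ j, y j ∈ closedBall (0 : Euc d) 1) →
        GenPos c y →
        E ⊆ closedBall (0 : Euc d) 10 →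
        MeasurableSet E →
        (∀ ρ : ℝ, δ ≤ ρ → ρ ≤ 1 → ∀ a v : Euc d, v ≠ 0 →
          volume (E ∩ Tube ρ a v)
            ≤ ENNReal.ofReal (C * δ ^ (((d : ℝ) - ε) / 2) * ρ ^ (((d : ℝ) - 1) / 2))) →
        volume {x ∈ E | ∃ r : ℝ, 0 < r ∧ ∀ j, |dist x (y j) - r| ≤ δ ^ (1 - ε)}
          ≤ ENNReal.ofReal (δ ^ ((2 * (d : ℝ) - 1) / 2 - K * ε)) := by
  obtain ⟨M, hM, hsubset⟩ := exists_subset_tube_of_almost_equidistant (by omega : 1 ≤ d) hc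
  have hd' : (2 : ℝ) ≤ d := by exact_mod_cast hd
  refine ⟨d, by linarith, 1 / 2, by norm_num, fun ε hε hε₀ => ?_⟩
  refine ⟨min (M⁻¹ ^ (1 / 2 : ℝ)⁻¹) ((C * M ^ (((d : ℝ) - 1) / 2))⁻¹ ^ ((d : ℝ) * ε / 2)⁻¹),
    by have := zero_lt_one.trans_le hM; have := zero_lt_one.trans_le hC; positivity, ?_⟩
  intro δ hδ hδ₀ y E hy hgp hE _ htube
  obtain ⟨a, u, hu, hS⟩ := hsubset (δ ^ (1 - ε)) y
    {x ∈ E | ∃ r : ℝ, 0 < r ∧ ∀ j, |dist x (y j) - r| ≤ δ ^ (1 - ε)} (by positivity)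
    (fun j => mem_closedBall_zero_iff.1 (hy j)) hgp (fun x hx => hE hx.1)
    fun x ⟨_, r, _, hr⟩ => ⟨r, hr⟩
  obtain ⟨hδρ, hρ1⟩ :=
    mul_rpow_one_sub_mem_Icc hM hδ hε.le hε₀.le (hδ₀.trans_le (min_le_left _ _)).le
  calc volume {x ∈ E | ∃ r : ℝ, 0 < r ∧ ∀ j, |dist x (y j) - r| ≤ δ ^ (1 - ε)}
      ≤ volume (E ∩ Tube (M * δ ^ (1 - ε)) a u) := measure_mono (subset_inter (sep_subset _ _) hS)
    _ ≤ _ := htube _ hδρ hρ1 a u hu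
    _ ≤ _ := ENNReal.ofReal_le_ofReal <| tube_bound_le_rpow (by linarith) (by linarith)
        (by positivity) hδ (hδ₀.trans_le (min_le_right _ _)).le

end
end

section
/- Fix an integer d ≥ 2 and a constant C ≥ 1. There exist K ≥ 1 and ε_0 > 0 such that for every ε ∈ (0,ε_0) there exists δ_0 > 0 with the following property for all δ ∈ (0,δ_0). Let D ⊆ [0,C] be a (δ,1/2)_1 set with constant C, let x ∈ ℝ^d, and let E_1 ⊆ ℝ^d be a measurable subset of a ball of radius 1 such that for every sphere S centered at x and every ρ ∈ [δ,1] one has vol({ y ∈ E_1 : dist(y,S) ≤ ρ }) ≤ C·δ^{(d−ε)/2}·ρ^{1/2}. Then the Lebesgue measure in ℝ^{d²} of the set { (y_1,…,y_d) ∈ E_1^d : there exists r ∈ D with ||y_j − x| − r| ≤ δ^{1−ε} for every 1 ≤ j ≤ d } is at most δ^{(d²+d−1)/2 − Kε}. -/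
open MeasureTheory Metric Set
open scoped ENNReal

noncomputable section

/-- `A ⊆ ℝ` is a `(δ,ρ)_1` set with constant `C`. -/
def IsDeltaRhoSet1 (δ ρ C : ℝ) (A : Set ℝ) : Prop :=
  ∀ (x r : ℝ), δ ≤ r →
    volume (A ∩ closedBall x r) ≤ ENNReal.ofReal (C * δ ^ (1 - ρ) * r ^ ρ)

lemma infDist_sphere_le' {n : ℕ} (x y : EuclideanSpace ℝ (Fin (n+1))) (r : ℝ) (hr : 0 ≤ r) :
    infDist y (sphere x r) ≤ |dist y x - r| := by
  by_cases hy : y = x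
  · rw [hy]
    have hp : x + r • EuclideanSpace.single (0 : Fin (n+1)) (1:ℝ) ∈ sphere x r := by
      simp [mem_sphere_iff_norm, EuclideanSpace.norm_single, norm_smul, abs_of_nonneg hr]
    calc infDist x (sphere x r) ≤ dist x (x + r • EuclideanSpace.single (0 : Fin (n+1)) (1:ℝ)) :=
          infDist_le_dist_of_mem hp
      _ = r := by
          rw [dist_comm, dist_self_add_left, norm_smul]
          simp [EuclideanSpace.norm_single, abs_of_nonneg hr]
      _ = |dist x x - r| := by simp [abs_of_nonneg hr]
  · set t := dist y x with ht
    have htpos : 0 < t := dist_pos.2 hy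
    set p := x + (r / t) • (y - x) with hp
    have hpm : p ∈ sphere x r := by
      rw [mem_sphere_iff_norm, hp, add_sub_cancel_left, norm_smul,
        ← dist_eq_norm y x, ← ht, Real.norm_eq_abs, abs_of_nonneg (by positivity)]
      field_simp
    have hd : dist y p = |t - r| := by
      rw [dist_eq_norm, hp]
      have h1 : y - (x + (r / t) • (y - x)) = (1 - r / t) • (y - x) := by
        rw [sub_smul, one_smul]; abel
      have h2 : (1 - r / t) * t = t - r := by field_simp
      rw [h1, norm_smul, ← dist_eq_norm y x, ← ht, Real.norm_eq_abs]
      calc |1 - r/t| * t = |(1 - r/t) * t| := by rw [abs_mul, abs_of_pos htpos]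
        _ = |t - r| := by rw [h2]
    calc infDist y (sphere x r) ≤ dist y p := infDist_le_dist_of_mem hpm
      _ = |dist y x - r| := by rw [hd, ht]

/-- **Nondegeneracy of lines (Lemma 1.7 (ii)).** For a fixed point `x`, the measure of the
set of `d`-tuples of `E_1` pointing at `x` is at most `δ^((d²+d-1)/2 - Kε)`. -/
theorem nondegeneracy_of_lines_ii (d : ℕ) (hd : 2 ≤ d) (C : ℝ) (hC : 1 ≤ C) :
    ∃ K : ℝ, 1 ≤ K ∧ ∃ ε₀ : ℝ, 0 < ε₀ ∧ ∀ ε : ℝ, 0 < ε → ε < ε₀ →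
      ∃ δ₀ : ℝ, 0 < δ₀ ∧ ∀ δ : ℝ, 0 < δ → δ < δ₀ →
      ∀ (D : Set ℝ) (x : Euc d) (b : Euc d) (E₁ : Set (Euc d)),
        D ⊆ Icc 0 C →
        IsDeltaRhoSet1 δ (1 / 2) C D →
        E₁ ⊆ closedBall b 1 →
        MeasurableSet E₁ →
        (∀ r' : ℝ, 0 < r' → ∀ ρ : ℝ, δ ≤ ρ → ρ ≤ 1 →
          volume {y ∈ E₁ | infDist y (sphere x r') ≤ ρ}
            ≤ ENNReal.ofReal (C * δ ^ (((d : ℝ) - ε) / 2) * ρ ^ ((1 : ℝ) / 2))) →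
        volume {y : Fin d → Euc d |
            (∀ j, y j ∈ E₁) ∧ ∃ r ∈ D, ∀ j, |dist (y j) x - r| ≤ δ ^ (1 - ε)}
          ≤ ENNReal.ofReal (δ ^ (((d : ℝ) ^ 2 + d - 1) / 2 - K * ε)) := by
  obtain ⟨n, rfl⟩ : ∃ n, d = n + 1 := ⟨d - 1, by omega⟩
  have hC0 : (0:ℝ) < C := lt_of_lt_of_le one_pos hC
  refine ⟨2 * ((n:ℝ) + 1), by nlinarith [Nat.cast_nonneg (α := ℝ) n], 1/2, by norm_num, ?_⟩
  intro ε hε hε2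
  set Q : ℝ := C * (2 * C) ^ n with hQ
  have hQ1 : (1:ℝ) ≤ Q := by
    have h2C : (1:ℝ) ≤ 2 * C := by linarith
    calc (1:ℝ) = 1 * 1 := by ring
      _ ≤ C * (2*C)^n := mul_le_mul hC (one_le_pow₀ h2C) zero_le_one hC0.le
  have hQ0 : (0:ℝ) < Q := lt_of_lt_of_le one_pos hQ1
  set e0 : ℝ := ε * (2 * (n:ℝ) + 3) / 2 with he0
  have he0pos : 0 < e0 := by positivity
  refine ⟨min (1/16) (Q ^ (-(1:ℝ)/e0)), lt_min (by norm_num) (Real.rpow_pos_of_pos hQ0 _), ?_⟩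
  intro δ hδ hδ0
  intro D x b E₁ hDsub hDset hE1b hE1m hsph
  have hδ16 : δ ≤ 1/16 := le_of_lt (lt_of_lt_of_le hδ0 (min_le_left _ _))
  have hδQ : δ ≤ Q ^ (-(1:ℝ)/e0) := le_of_lt (lt_of_lt_of_le hδ0 (min_le_right _ _))
  have hδ1 : δ ≤ 1 := by linarith
  set A : ℝ := (((n+1:ℕ):ℝ) - ε) / 2 with hA
  set B : ℝ := 1 - ε with hB
  have hBhalf : (1:ℝ)/2 ≤ B := by rw [hB]; linarith
  have hδB : δ ^ B ≤ 1/4 := by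
    have h1 : δ ^ B ≤ δ ^ ((1:ℝ)/2) :=
      Real.rpow_le_rpow_of_exponent_ge hδ hδ1 hBhalf
    have h2 : δ ^ ((1:ℝ)/2) ≤ (1/16 : ℝ) ^ ((1:ℝ)/2) :=
      Real.rpow_le_rpow hδ.le hδ16 (by norm_num)
    have h3 : (1/16 : ℝ) ^ ((1:ℝ)/2) = 1/4 := by
      rw [show (1/16:ℝ) = (1/4:ℝ)^(2:ℕ) by norm_num, ← Real.rpow_natCast (1/4:ℝ) 2,
        ← Real.rpow_mul (by norm_num)]
      norm_num
    linarith
  have hδBpos : 0 < δ ^ B := Real.rpow_pos_of_pos hδ _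
  have h2B : (0:ℝ) < 2 * δ ^ B := by positivity
  have hδApos : 0 < δ ^ A := Real.rpow_pos_of_pos hδ _
  have hδleB : δ ≤ δ ^ B := by
    have := Real.rpow_le_rpow_of_exponent_ge hδ hδ1 (show B ≤ 1 by rw [hB]; linarith)
    rwa [Real.rpow_one] at this
  set ρ : ℝ := 4 * δ ^ B with hρ
  have hρpos : 0 < ρ := by rw [hρ]; positivity
  have hρδ : δ ≤ ρ := by rw [hρ]; nlinarith
  have hρ1 : ρ ≤ 1 := by rw [hρ]; linarith
  -- Volume of E₁
  have volE : volume E₁ ≤ ENNReal.ofReal (C * δ ^ A) := by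
    set a : ℝ := max (dist b x - 1) 0 with ha
    have hr'pos : (0:ℝ) < a + 1 := by positivity
    have hsubE : E₁ ⊆ {y ∈ E₁ | infDist y (sphere x (a + 1)) ≤ 1} := by
      intro y hy
      refine ⟨hy, ?_⟩
      have hyx1 : dist y b ≤ 1 := mem_closedBall.1 (hE1b hy)
      have hlow : a ≤ dist y x := by
        apply max_le
        · have h1 := dist_triangle b y x
          have hby : dist b y ≤ 1 := by rwa [dist_comm]
          linarith
        · exact dist_nonneg
      have hhigh : dist y x ≤ a + 2 := by
        have h1 := dist_triangle y b x
        have h2 : dist b x - 1 ≤ a := le_max_left _ _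
        linarith
      calc infDist y (sphere x (a+1)) ≤ |dist y x - (a+1)| :=
            infDist_sphere_le' x y (a+1) hr'pos.le
        _ ≤ 1 := by rw [abs_le]; constructor <;> linarith
    calc volume E₁ ≤ volume {y ∈ E₁ | infDist y (sphere x (a + 1)) ≤ 1} :=
          measure_mono hsubE
      _ ≤ ENNReal.ofReal (C * δ ^ A * (1:ℝ) ^ ((1:ℝ)/2)) := hsph (a+1) hr'pos 1 hδ1 le_rfl
      _ = ENNReal.ofReal (C * δ ^ A) := by rw [Real.one_rpow, mul_one]
  -- slice sets
  set F : Euc (n+1) → Set (Euc (n+1)) :=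
    fun y0 => {z ∈ E₁ | |dist z x - dist y0 x| ≤ 2 * δ ^ B} with hF
  set m : ℝ := C * δ ^ A * ρ ^ ((1:ℝ)/2) with hm
  have hm0 : 0 ≤ m := by
    rw [hm]
    exact mul_nonneg (mul_nonneg hC0.le hδApos.le) (Real.rpow_nonneg hρpos.le _)
  have Mslice : ∀ y0 : Euc (n+1), volume (F y0) ≤ ENNReal.ofReal m := by
    intro y0
    have hr'pos : (0:ℝ) < dist y0 x + 2 * δ ^ B :=
      add_pos_of_nonneg_of_pos dist_nonneg h2B
    have hsubF : F y0 ⊆ {z ∈ E₁ | infDist z (sphere x (dist y0 x + 2 * δ ^ B)) ≤ ρ} := by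
      rintro z ⟨hz1, hz2⟩
      refine ⟨hz1, ?_⟩
      have habs : |dist z x - (dist y0 x + 2 * δ ^ B)|
          ≤ |dist z x - dist y0 x| + 2 * δ ^ B := by
        have h := abs_add_le (dist z x - dist y0 x) (-(2 * δ ^ B))
        rw [abs_neg, abs_of_nonneg h2B.le] at h
        have heq : dist z x - (dist y0 x + 2 * δ ^ B)
            = dist z x - dist y0 x + -(2 * δ ^ B) := by ring
        rw [heq]
        exact h
      calc infDist z (sphere x (dist y0 x + 2 * δ ^ B))
          ≤ |dist z x - (dist y0 x + 2 * δ ^ B)| := infDist_sphere_le' _ _ _ hr'pos.le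
        _ ≤ |dist z x - dist y0 x| + 2 * δ ^ B := habs
        _ ≤ ρ := by rw [hρ]; linarith
    exact le_trans (measure_mono hsubF) (hsph _ hr'pos ρ hρδ hρ1)
  -- the product set
  set U : Set (Euc (n+1) × (Fin n → Euc (n+1))) :=
    {p | p.1 ∈ E₁ ∧ ∀ j, p.2 j ∈ E₁ ∧ |dist (p.2 j) x - dist p.1 x| ≤ 2 * δ ^ B} with hU
  have hUm : MeasurableSet U := by
    have hrepr : U = (Prod.fst ⁻¹' E₁) ∩ ⋂ j : Fin n,
        (((fun p : Euc (n+1) × (Fin n → Euc (n+1)) => p.2 j) ⁻¹' E₁) ∩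
          {p : Euc (n+1) × (Fin n → Euc (n+1)) |
            |dist (p.2 j) x - dist p.1 x| ≤ 2 * δ ^ B}) := by
      ext p
      simp only [hU, mem_setOf_eq, mem_inter_iff, mem_preimage, mem_iInter]
    rw [hrepr]
    refine (measurable_fst hE1m).inter (MeasurableSet.iInter fun j => ?_)
    refine (((measurable_pi_apply j).comp measurable_snd) hE1m).inter ?_
    have hcont : Continuous fun p : Euc (n+1) × (Fin n → Euc (n+1)) =>
        |dist (p.2 j) x - dist p.1 x| :=
      ((((continuous_apply j).comp continuous_snd).dist continuous_const).sub
        (continuous_fst.dist continuous_const)).abs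
    exact measurableSet_le hcont.measurable measurable_const
  set e : (Fin (n+1) → Euc (n+1)) ≃ᵐ Euc (n+1) × (Fin n → Euc (n+1)) :=
    MeasurableEquiv.piFinSuccAbove (fun _ : Fin (n+1) => Euc (n+1)) 0 with he
  have hsubS : {y : Fin (n+1) → Euc (n+1) |
      (∀ j, y j ∈ E₁) ∧ ∃ r ∈ D, ∀ j, |dist (y j) x - r| ≤ δ ^ B} ⊆ e ⁻¹' U := by
    rintro y ⟨hy1, r, _, hy2⟩
    refine ⟨hy1 0, fun j => ⟨hy1 _, ?_⟩⟩
    have hk := hy2 ((0 : Fin (n+1)).succAbove j)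
    have h0 := hy2 0
    calc |dist (y ((0 : Fin (n+1)).succAbove j)) x - dist (y 0) x|
        ≤ |dist (y ((0 : Fin (n+1)).succAbove j)) x - r| + |r - dist (y 0) x| :=
          abs_sub_le _ _ _
      _ ≤ δ ^ B + δ ^ B := by
          rw [abs_sub_comm r]
          exact add_le_add hk h0
      _ = 2 * δ ^ B := by ring
  have hprodvol : volume (e ⁻¹' U)
      = ((volume : Measure (Euc (n+1))).prod
          (Measure.pi fun _ : Fin n => (volume : Measure (Euc (n+1))))) U := by
    rw [he, show (volume : Measure (Fin (n+1) → Euc (n+1)))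
        = Measure.pi fun _ => (volume : Measure (Euc (n+1))) from volume_pi]
    exact (measurePreserving_piFinSuccAbove (fun _ : Fin (n+1) =>
      (volume : Measure (Euc (n+1)))) 0).measure_preimage hUm.nullMeasurableSet
  have hslice : ∀ y0 : Euc (n+1),
      (Measure.pi fun _ : Fin n => (volume : Measure (Euc (n+1)))) (Prod.mk y0 ⁻¹' U)
        ≤ E₁.indicator (fun _ => (ENNReal.ofReal m) ^ n) y0 := by
    intro y0
    by_cases hy0 : y0 ∈ E₁
    · have hpre : Prod.mk y0 ⁻¹' U = Set.pi univ (fun _ : Fin n => F y0) := by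
        ext z
        simp only [hU, hF, mem_preimage, mem_setOf_eq, Set.mem_pi, mem_univ, forall_true_left]
        constructor
        · rintro ⟨-, h⟩ j; exact h j
        · intro h; exact ⟨hy0, h⟩
      rw [hpre, Measure.pi_pi, indicator_of_mem hy0]
      calc ∏ _j : Fin n, volume (F y0) = volume (F y0) ^ n := by
            rw [Finset.prod_const, Finset.card_univ, Fintype.card_fin]
        _ ≤ (ENNReal.ofReal m) ^ n := pow_le_pow_left' (Mslice y0) n
    · have hpre : Prod.mk y0 ⁻¹' U = ∅ := by
        ext z
        simp only [hU, mem_preimage, mem_setOf_eq, mem_empty_iff_false, iff_false]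
        rintro ⟨h, -⟩; exact hy0 h
      rw [hpre, indicator_of_notMem hy0]
      simp
  have main : volume {y : Fin (n+1) → Euc (n+1) |
      (∀ j, y j ∈ E₁) ∧ ∃ r ∈ D, ∀ j, |dist (y j) x - r| ≤ δ ^ B}
      ≤ (ENNReal.ofReal m) ^ n * ENNReal.ofReal (C * δ ^ A) := by
    calc volume {y : Fin (n+1) → Euc (n+1) |
        (∀ j, y j ∈ E₁) ∧ ∃ r ∈ D, ∀ j, |dist (y j) x - r| ≤ δ ^ B}
        ≤ volume (e ⁻¹' U) := measure_mono hsubS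
      _ = ((volume : Measure (Euc (n+1))).prod
          (Measure.pi fun _ : Fin n => (volume : Measure (Euc (n+1))))) U := hprodvol
      _ = ∫⁻ y0, (Measure.pi fun _ : Fin n => (volume : Measure (Euc (n+1))))
            (Prod.mk y0 ⁻¹' U) ∂(volume : Measure (Euc (n+1))) :=
          Measure.prod_apply hUm
      _ ≤ ∫⁻ y0, E₁.indicator (fun _ => (ENNReal.ofReal m) ^ n) y0
            ∂(volume : Measure (Euc (n+1))) := lintegral_mono hslice
      _ = (ENNReal.ofReal m) ^ n * volume E₁ := lintegral_indicator_const hE1m _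
      _ ≤ (ENNReal.ofReal m) ^ n * ENNReal.ofReal (C * δ ^ A) :=
          mul_le_mul_right volE _
  refine le_trans main ?_
  rw [← ENNReal.ofReal_pow hm0, ← ENNReal.ofReal_mul (pow_nonneg hm0 n)]
  apply ENNReal.ofReal_le_ofReal
  push_cast
  -- real arithmetic
  have h4 : ((4:ℝ)) ^ ((1:ℝ)/2) = 2 := by
    rw [show (4:ℝ) = (2:ℝ)^(2:ℕ) by norm_num, ← Real.rpow_natCast (2:ℝ) 2,
      ← Real.rpow_mul (by norm_num)]
    norm_num
  have hmval : m = 2 * C * δ ^ (A + B * (1/2)) := by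
    rw [hm, hρ, Real.mul_rpow (by norm_num) hδBpos.le, h4,
      ← Real.rpow_mul hδ.le, Real.rpow_add hδ]
    ring
  have hQe : Q * δ ^ e0 ≤ 1 := by
    have h1 : δ ^ e0 ≤ (Q ^ (-(1:ℝ)/e0)) ^ e0 := Real.rpow_le_rpow hδ.le hδQ he0pos.le
    have h2 : (Q ^ (-(1:ℝ)/e0)) ^ e0 = Q ^ (-(1:ℝ)) := by
      rw [← Real.rpow_mul hQ0.le, div_mul_cancel₀]
      exact he0pos.ne'
    rw [h2] at h1
    have h3 : Q * δ ^ e0 ≤ Q * Q ^ (-(1:ℝ)) := mul_le_mul_of_nonneg_left h1 hQ0.le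
    rwa [Real.rpow_neg_one, mul_inv_cancel₀ hQ0.ne'] at h3
  have hkey : m ^ n * (C * δ ^ A) = Q * δ ^ ((A + B * (1/2)) * (n:ℝ) + A) := by
    rw [hmval, mul_pow, ← Real.rpow_natCast (δ ^ (A + B * (1/2))) n,
      ← Real.rpow_mul hδ.le, Real.rpow_add hδ, hQ]
    ring
  have hEtgt : ((A + B * (1/2)) * (n:ℝ) + A)
      = ((((n:ℝ)+1) ^ 2 + ((n:ℝ)+1) - 1) / 2 - 2 * ((n:ℝ) + 1) * ε) + e0 := by
    rw [hA, hB, he0]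
    push_cast
    ring
  have hfinal : m ^ n * (C * δ ^ A)
      ≤ δ ^ ((((n:ℝ)+1) ^ 2 + ((n:ℝ)+1) - 1) / 2 - 2 * ((n:ℝ) + 1) * ε) := by
    rw [hkey, hEtgt, Real.rpow_add hδ]
    calc Q * (δ ^ ((((n:ℝ)+1) ^ 2 + ((n:ℝ)+1) - 1) / 2 - 2 * ((n:ℝ) + 1) * ε) * δ ^ e0)
        = δ ^ ((((n:ℝ)+1) ^ 2 + ((n:ℝ)+1) - 1) / 2 - 2 * ((n:ℝ) + 1) * ε) * (Q * δ ^ e0) := by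
          ring
      _ ≤ δ ^ ((((n:ℝ)+1) ^ 2 + ((n:ℝ)+1) - 1) / 2 - 2 * ((n:ℝ) + 1) * ε) * 1 :=
          mul_le_mul_of_nonneg_left hQe (Real.rpow_nonneg hδ.le _)
      _ = δ ^ ((((n:ℝ)+1) ^ 2 + ((n:ℝ)+1) - 1) / 2 - 2 * ((n:ℝ) + 1) * ε) := mul_one _
  exact hfinal

end
end

section
/- Fix an integer d ≥ 2 and constants c > 0, C ≥ 1. There exist K ≥ 1 and ε_0 > 0 such that for every ε ∈ (0,ε_0) there exists δ_0 > 0 with the following property for all δ ∈ (0,δ_0). In the pinned setup, for every δ-tube T one has vol(T ∩ F) ≤ δ^{d − 1/2 − Kε}. -/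
open MeasureTheory Metric Set
open scoped ENNReal

noncomputable section

open scoped RealInnerProductSpace Nat

/-!
Normalise the direction `e` of the tube. For `y ∈ F` the vectors `x j - y` have length at most
`C` and determinant at least `c`, so expanding the determinant in an orthonormal basis starting
with `e` shows that `|⟪e, x j - y⟫| ≳ c` for some `j`. Fix such a `j`. Along a line
`t ↦ y + t • e` the distance to `x j` is `√((t - p)² + q)`, whose two inverse branches are
Lipschitz away from `t = p`; hence every line parallel to `e` meets this part of `F` in measure
`≲ |D| ≲ δ^(1/2)`. By Fubini over the cross-section of the tube, a `δ`-ball in `ℝ^(d-1)`, the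
part of `F` in the tube has measure `≲ δ^(d-1) · δ^(1/2)`, and for small `δ` the constant is
absorbed into `δ^(-ε)`.
-/

theorem Matrix.abs_det_le_sum_abs_mul {m : ℕ} (M : Matrix (Fin (m + 1)) (Fin (m + 1)) ℝ) {R : ℝ}
    (hM : ∀ i j, |M i j| ≤ R) : |M.det| ≤ ∑ j, |M 0 j| * (m ! * R ^ m) := by
  rw [Matrix.det_succ_row_zero]
  refine (Finset.abs_sum_le_sum_abs _ _).trans (Finset.sum_le_sum fun j _ => ?_)
  have hminor : |(M.submatrix Fin.succ j.succAbove).det| ≤ m ! * R ^ m := by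
    simpa using Matrix.det_le (A := M.submatrix Fin.succ j.succAbove) (abv := AbsoluteValue.abs)
      fun i k => hM i.succ (j.succAbove k)
  rw [abs_mul, abs_mul, abs_pow, abs_neg, abs_one, one_pow, one_mul]
  exact mul_le_mul_of_nonneg_left hminor (abs_nonneg _)

theorem exists_orthonormalBasis_apply_zero_eq {m : ℕ} {e : Euc (m + 1)} (he : ‖e‖ = 1) :
    ∃ B : OrthonormalBasis (Fin (m + 1)) ℝ (Euc (m + 1)), B 0 = e := by
  have horth : Orthonormal ℝ (({0} : Set (Fin (m + 1))).domRestrict fun _ => e) :=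
    ⟨fun _ => he, fun i j hij => absurd (Subsingleton.elim i j) hij⟩
  obtain ⟨B, hB⟩ := horth.exists_orthonormalBasis_extension_of_card_eq (by simp)
  exact ⟨B, hB 0 rfl⟩

theorem OrthonormalBasis.abs_det_toBasis_toMatrix {ι : Type*} [Fintype ι] [DecidableEq ι]
    (B : OrthonormalBasis ι ℝ (EuclideanSpace ℝ ι)) (w : ι → EuclideanSpace ℝ ι) :
    |(B.toBasis.toMatrix w).det| = |(Matrix.of fun i j => w j i).det| := by
  set E := (EuclideanSpace.basisFun ι ℝ).toBasis
  have hw : (Matrix.of fun i j => w j i) = E.toMatrix B.toBasis * B.toBasis.toMatrix w := by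
    rw [Module.Basis.toMatrix_mul_toMatrix]; ext i j; simp [E, Module.Basis.toMatrix_apply]
  rw [hw, Matrix.det_mul, abs_mul, ← E.det_apply]
  rcases (EuclideanSpace.basisFun ι ℝ).det_to_matrix_orthonormalBasis_real B with h | h <;>
    simp [E, h]

theorem exists_le_abs_inner_of_le_abs_det {m : ℕ} {R c : ℝ} (hR : 0 < R)
    (w : Fin (m + 1) → Euc (m + 1)) (hw : ∀ j, ‖w j‖ ≤ R)
    (hdet : c ≤ |(Matrix.of fun i j => w j i).det|) {e : Euc (m + 1)} (he : ‖e‖ = 1) :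
    ∃ j, c / ((m + 1)! * R ^ m) ≤ |⟪e, w j⟫| := by
  obtain ⟨B, rfl⟩ := exists_orthonormalBasis_apply_zero_eq he
  set M := B.toBasis.toMatrix w
  have hM : ∀ i j, M i j = ⟪B i, w j⟫ := fun i j => by
    simp [M, Module.Basis.toMatrix_apply, B.repr_apply_apply]
  have hMR : ∀ i j, |M i j| ≤ R := fun i j => by
    rw [hM]
    exact (abs_real_inner_le_norm _ _).trans (by simpa [B.orthonormal.1 i] using hw j)
  have hK : (0 : ℝ) < m ! * R ^ m := by positivity
  have hsum : ∑ _j : Fin (m + 1), c / ((m + 1)! * R ^ m) * (m ! * R ^ m)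
      ≤ ∑ j, |M 0 j| * (m ! * R ^ m) := by
    refine le_trans (le_of_eq ?_) ((B.abs_det_toBasis_toMatrix w ▸ hdet).trans
      (M.abs_det_le_sum_abs_mul hMR))
    rw [Finset.sum_const, Finset.card_univ, Fintype.card_fin, nsmul_eq_mul, Nat.factorial_succ]
    push_cast
    field_simp
  obtain ⟨j, -, hj⟩ := Finset.exists_le_of_sum_le Finset.univ_nonempty hsum
  exact ⟨j, hM 0 j ▸ le_of_mul_le_mul_right hj hK⟩

theorem lipschitzOnWith_sqrt_sq_sub {c₁ q R : ℝ} (hc₁ : 0 < c₁) :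
    LipschitzOnWith (R / c₁).toNNReal (fun u => √(u ^ 2 - q)) (Icc √(c₁ ^ 2 + q) R) := by
  have hlow : ∀ u ∈ Icc √(c₁ ^ 2 + q) R,
      0 ≤ u ∧ u ≤ R ∧ c₁ ≤ √(u ^ 2 - q) ∧ √(u ^ 2 - q) ^ 2 = u ^ 2 - q := by
    rintro u ⟨hu, huR⟩
    have hu0 : 0 ≤ u := (Real.sqrt_nonneg _).trans hu
    have hu2 : c₁ ^ 2 + q ≤ u ^ 2 := (Real.sqrt_le_left hu0).1 hu
    exact ⟨hu0, huR, Real.le_sqrt_of_sq_le (by linarith), Real.sq_sqrt (by nlinarith)⟩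
  refine LipschitzOnWith.of_dist_le_mul fun u hu v hv => ?_
  obtain ⟨hu0, huR, hau, hau2⟩ := hlow u hu
  obtain ⟨hv0, hvR, hbv, hbv2⟩ := hlow v hv
  set a := √(u ^ 2 - q)
  set b := √(v ^ 2 - q)
  have hprod : |a - b| * (a + b) = |u - v| * (u + v) := by
    calc |a - b| * (a + b) = |(a - b) * (a + b)| := by
          rw [abs_mul, abs_of_nonneg (by linarith : 0 ≤ a + b)]
      _ = |(u - v) * (u + v)| := by congr 1; linear_combination hau2 - hbv2
      _ = |u - v| * (u + v) := by rw [abs_mul, abs_of_nonneg (by linarith : 0 ≤ u + v)]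
  rw [Real.dist_eq, Real.dist_eq, Real.coe_toNNReal _ (div_nonneg (hu0.trans huR) hc₁.le),
    div_mul_eq_mul_div, le_div_iff₀ hc₁]
  nlinarith [abs_nonneg (a - b), abs_nonneg (u - v)]

theorem volume_setOf_sqrt_sq_add_mem_le {c₁ q R : ℝ} (hc₁ : 0 < c₁) (hq : 0 ≤ q) {D : Set ℝ}
    (hD : D ⊆ Iic R) (p : ℝ) :
    volume {t : ℝ | √((t - p) ^ 2 + q) ∈ D ∧ c₁ ≤ |t - p|}
      ≤ 2 * ENNReal.ofReal (R / c₁) * volume D := by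
  set h : ℝ → ℝ := fun u => √(u ^ 2 - q)
  set S := D ∩ Icc √(c₁ ^ 2 + q) R
  have hhS : volume (h '' S) ≤ ENNReal.ofReal (R / c₁) * volume D := by
    rw [← hausdorffMeasure_real]
    calc μH[1] (h '' S) ≤ ((R / c₁).toNNReal : ℝ≥0∞) ^ (1 : ℝ) * μH[1] S :=
          ((lipschitzOnWith_sqrt_sq_sub hc₁).mono inter_subset_right).hausdorffMeasure_image_le
            zero_le_one
      _ ≤ ENNReal.ofReal (R / c₁) * μH[1] D := by
          rw [ENNReal.rpow_one]; exact mul_le_mul_right (measure_mono inter_subset_left) _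
  have hcover : {t : ℝ | √((t - p) ^ 2 + q) ∈ D ∧ c₁ ≤ |t - p|}
      ⊆ (· + -p) ⁻¹' (h '' S ∪ -(h '' S)) := by
    rintro t ⟨htD, htc⟩
    have hsq : c₁ ^ 2 ≤ (t - p) ^ 2 := by simpa using pow_le_pow_left₀ hc₁.le htc 2
    have huS : √((t - p) ^ 2 + q) ∈ S :=
      ⟨htD, Real.sqrt_le_sqrt (by linarith), hD htD⟩
    have hhu : h √((t - p) ^ 2 + q) = |t + -p| := by
      simp only [h]
      rw [Real.sq_sqrt (by positivity), add_sub_cancel_right, Real.sqrt_sq_eq_abs, sub_eq_add_neg]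
    rcases le_or_gt 0 (t + -p) with htp | htp
    · exact Or.inl ⟨_, huS, hhu.trans (abs_of_nonneg htp)⟩
    · exact Or.inr ⟨_, huS, hhu.trans (abs_of_neg htp)⟩
  calc volume {t : ℝ | √((t - p) ^ 2 + q) ∈ D ∧ c₁ ≤ |t - p|}
      ≤ volume (h '' S ∪ -(h '' S)) :=
        (measure_mono hcover).trans_eq (measure_preimage_add_right _ _ _)
    _ ≤ volume (h '' S) + volume (h '' S) :=
        (measure_union_le _ _).trans_eq (by rw [Measure.measure_neg])
    _ ≤ 2 * ENNReal.ofReal (R / c₁) * volume D := by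
        rw [← two_mul, mul_assoc]; gcongr

theorem volume_setOf_dist_add_smul_mem_le {E : Type*} [NormedAddCommGroup E]
    [InnerProductSpace ℝ E] {e : E} (he : ‖e‖ = 1) (x y : E) {c₁ R : ℝ} (hc₁ : 0 < c₁)
    {D : Set ℝ} (hD : D ⊆ Iic R) :
    volume {t : ℝ | dist (y + t • e) x ∈ D ∧ c₁ ≤ |⟪e, x - (y + t • e)⟫|}
      ≤ 2 * ENNReal.ofReal (R / c₁) * volume D := by
  set p := ⟪e, x - y⟫ with hp
  have hq : 0 ≤ ‖x - y‖ ^ 2 - p ^ 2 := by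
    have := abs_real_inner_le_norm e (x - y)
    rw [he, one_mul] at this
    nlinarith [sq_abs p, abs_nonneg p]
  have hsub (t : ℝ) : x - (y + t • e) = (x - y) - t • e := by abel
  have hdist (t : ℝ) : dist (y + t • e) x = √((t - p) ^ 2 + (‖x - y‖ ^ 2 - p ^ 2)) := by
    rw [dist_comm, dist_eq_norm, hsub, ← Real.sqrt_sq (norm_nonneg _), norm_sub_sq_real,
      inner_smul_right, norm_smul, he, real_inner_comm, ← hp, Real.norm_eq_abs, mul_one, sq_abs]
    ring_nf
  have hinner (t : ℝ) : |⟪e, x - (y + t • e)⟫| = |t - p| := by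
    rw [hsub, inner_sub_right, inner_smul_right, real_inner_self_eq_norm_sq, he, ← hp, abs_sub_comm]
    ring_nf
  refine (measure_mono fun t ht => ?_).trans (volume_setOf_sqrt_sq_add_mem_le hc₁ hq hD p)
  exact ⟨hdist t ▸ ht.1, hinner t ▸ ht.2⟩

theorem MeasureTheory.Measure.prod_apply_le_mul_of_fiber_le {α β : Type*} [MeasurableSpace α]
    [MeasurableSpace β] {μ : Measure α} {ν : Measure β} [SFinite μ] [SFinite ν]
    {s : Set (α × β)} (hs : MeasurableSet s) {t : Set β} (ht : MeasurableSet t)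
    (hst : ∀ p ∈ s, p.2 ∈ t) {M : ℝ≥0∞} (hM : ∀ y, μ ((·, y) ⁻¹' s) ≤ M) :
    μ.prod ν s ≤ M * ν t := by
  rw [Measure.prod_apply_symm hs, ← lintegral_indicator_const ht]
  refine lintegral_mono fun y => ?_
  by_cases hy : y ∈ t
  · simpa [hy] using hM y
  · have hempty : (·, y) ⁻¹' s = ∅ := eq_empty_of_forall_notMem fun x hx => hy (hst _ hx)
    simp [hy, hempty]

theorem volume_tube_inter_le {m : ℕ} {e : Euc (m + 1)} (he : ‖e‖ = 1) (a : Euc (m + 1))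
    {δ : ℝ} (hδ : 0 ≤ δ) {S : Set (Euc (m + 1))} (hS : MeasurableSet S) {M : ℝ≥0∞}
    (hM : ∀ y, volume {t : ℝ | y + t • e ∈ S} ≤ M) :
    volume (Tube δ a e ∩ S) ≤ M * ENNReal.ofReal ((2 * δ) ^ m) := by
  obtain ⟨B, rfl⟩ := exists_orthonormalBasis_apply_zero_eq he
  set Ψ : Euc (m + 1) ≃ᵐ ℝ × (Fin m → ℝ) := B.measurableEquiv.trans
    ((MeasurableEquiv.toLp 2 (Fin (m + 1) → ℝ)).symm.trans
      (MeasurableEquiv.piFinSuccAbove (fun _ => ℝ) 0))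
  have hΨ : MeasurePreserving Ψ volume (volume.prod volume) :=
    ((volume_preserving_piFinSuccAbove (fun _ => ℝ) 0).comp
      (EuclideanSpace.volume_preserving_symm_measurableEquiv_toLp _)).comp
      B.measurePreserving_measurableEquiv
  have hΨ_apply (y : Euc (m + 1)) : Ψ y = (B.repr y 0, fun i => B.repr y i.succ) := by
    ext i
    · rfl
    · simp [Ψ, OrthonormalBasis.measurableEquiv, Fin.tail]
  have hΨ_add (y : Euc (m + 1)) (t : ℝ) : Ψ (y + t • B 0) = ((Ψ y).1 + t, (Ψ y).2) := by
    simp [hΨ_apply, Fin.succ_ne_zero]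
  have hΨ_dist (y w : Euc (m + 1)) : dist (Ψ y).2 (Ψ w).2 ≤ dist y w := by
    refine (dist_pi_le_iff dist_nonneg).2 fun i => ?_
    rw [hΨ_apply, hΨ_apply, Real.dist_eq, dist_eq_norm, ← B.repr.norm_map]
    simpa using PiLp.norm_apply_le (B.repr (y - w)) i.succ
  have htube : ∀ y ∈ Tube δ a (B 0), (Ψ y).2 ∈ closedBall (Ψ a).2 δ := by
    refine fun y hy => mem_closedBall.2 (le_trans ?_ hy)
    refine (le_infDist (s := lineThrough a (B 0)) ⟨a, 0, by simp⟩).2 ?_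
    rintro _ ⟨t, rfl⟩
    simpa [hΨ_add] using hΨ_dist y (a + t • B 0)
  have hTS : MeasurableSet (Tube δ a (B 0) ∩ S) :=
    (isClosed_le (continuous_infDist_pt _) continuous_const).measurableSet.inter hS
  -- `Fin m → ℝ` carries the sup metric: the cross-section of the tube lies in a cube of side `2δ`
  have hball : volume (closedBall (Ψ a).2 δ) = ENNReal.ofReal ((2 * δ) ^ m) := by
    simpa using Real.volume_pi_closedBall (Ψ a).2 hδ
  rw [← hΨ.symm.measure_preimage_equiv, ← hball]
  refine Measure.prod_apply_le_mul_of_fiber_le (Ψ.measurable_invFun hTS) measurableSet_closedBall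
    (fun p hp => by simpa using htube _ hp.1) fun z => ?_
  refine (measure_mono fun t ht => ?_).trans (hM (Ψ.symm (0, z)))
  have hfiber : Ψ.symm (t, z) = Ψ.symm (0, z) + t • B 0 :=
    Ψ.symm_apply_eq.2 (by rw [hΨ_add, Ψ.apply_symm_apply, zero_add])
  simpa [hfiber] using ht.2

theorem lineThrough_smul {d : ℕ} (a v : Euc d) {r : ℝ} (hr : r ≠ 0) :
    lineThrough a (r • v) = lineThrough a v := by
  ext y
  constructor
  · rintro ⟨t, rfl⟩
    exact ⟨t * r, by simp only [mul_smul]⟩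
  · rintro ⟨t, rfl⟩
    exact ⟨t / r, by simp only [smul_smul, div_mul_cancel₀ _ hr]⟩

theorem tube_smul {d : ℕ} (ρ : ℝ) (a v : Euc d) {r : ℝ} (hr : r ≠ 0) :
    Tube ρ a (r • v) = Tube ρ a v := by
  simp only [Tube, lineThrough_smul a v hr]

theorem volume_tube_inter_le_of_le_abs_det {m : ℕ} {R c : ℝ} (hR : 0 < R) (hc : 0 < c)
    (x : Fin (m + 1) → Euc (m + 1)) {D : Set ℝ} (hD : D ⊆ Iic R) {F : Set (Euc (m + 1))}
    (hFm : MeasurableSet F) (hFD : ∀ y ∈ F, ∀ j, dist y (x j) ∈ D)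
    (hFdet : ∀ y ∈ F, c ≤ |(Matrix.of fun i j => (x j - y) i).det|)
    (a v : Euc (m + 1)) (hv : v ≠ 0) {δ : ℝ} (hδ : 0 ≤ δ) :
    volume (Tube δ a v ∩ F) ≤ ENNReal.ofReal (2 * (m + 1) * ((m + 1)! * R ^ (m + 1) / c))
      * volume D * ENNReal.ofReal ((2 * δ) ^ m) := by
  set c₁ := c / ((m + 1)! * R ^ m)
  have hc₁ : 0 < c₁ := by positivity
  set e := ‖v‖⁻¹ • v
  have he : ‖e‖ = 1 := norm_smul_inv_norm hv
  set G : Fin (m + 1) → Set (Euc (m + 1)) := fun j => {y | c₁ ≤ |⟪e, x j - y⟫|}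
  have hGm (j : Fin (m + 1)) : MeasurableSet (G j) :=
    (isClosed_le continuous_const (by fun_prop)).measurableSet
  have hcover : F ⊆ ⋃ j, F ∩ G j := fun y hy => by
    obtain ⟨j, hj⟩ := exists_le_abs_inner_of_le_abs_det hR (fun j => x j - y)
      (fun j => by simpa [dist_eq_norm'] using hD (hFD y hy j)) (hFdet y hy) he
    exact mem_iUnion.2 ⟨j, hy, hj⟩
  have hR_c₁ : R / c₁ = (m + 1)! * R ^ (m + 1) / c := by
    simp only [c₁]; field_simp; ring
  rw [← tube_smul δ a v (inv_ne_zero (norm_ne_zero_iff.2 hv))]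
  calc volume (Tube δ a e ∩ F)
      ≤ ∑ j, volume (Tube δ a e ∩ (F ∩ G j)) := by
        refine (measure_mono ?_).trans (measure_iUnion_fintype_le _ _)
        rw [← inter_iUnion]
        exact inter_subset_inter_right _ hcover
    _ ≤ ∑ _j : Fin (m + 1),
          2 * ENNReal.ofReal (R / c₁) * volume D * ENNReal.ofReal ((2 * δ) ^ m) :=
        Finset.sum_le_sum fun j _ => volume_tube_inter_le he a hδ (hFm.inter (hGm j)) fun y => by
          refine (measure_mono fun t ht => ?_).trans
            (volume_setOf_dist_add_smul_mem_le he (x j) y hc₁ hD)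
          exact ⟨hFD _ ht.1 j, ht.2⟩
    _ = _ := by
        have hm : ENNReal.ofReal (2 * (m + 1)) = 2 * (m + 1) := by
          rw [ENNReal.ofReal_mul zero_le_two]; norm_cast
        rw [Finset.sum_const, Finset.card_univ, Fintype.card_fin, nsmul_eq_mul, hR_c₁,
          ENNReal.ofReal_mul (by positivity), hm]
        push_cast
        ring

theorem IsDeltaRhoSet1.volume_le_of_subset_Icc {δ ρ C R : ℝ} {A : Set ℝ}
    (hA : IsDeltaRhoSet1 δ ρ C A) (hAR : A ⊆ Icc 0 R) (hδ : δ ≤ R / 2) :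
    volume A ≤ ENNReal.ofReal (C * δ ^ (1 - ρ) * (R / 2) ^ ρ) := by
  have hball : A ∩ closedBall (R / 2) (R / 2) = A :=
    inter_eq_left.2 (by rwa [Real.closedBall_eq_Icc, sub_self, add_halves])
  simpa [hball] using hA (R / 2) (R / 2) hδ

theorem exists_pos_forall_mul_rpow_le_rpow_sub (A α : ℝ) {ε : ℝ} (hε : 0 < ε) :
    ∃ δ₀ > 0, ∀ δ, 0 < δ → δ < δ₀ → A * δ ^ α ≤ δ ^ (α - ε) := by
  refine ⟨max A 1 ^ (-ε⁻¹), by positivity, fun δ hδ hδ₀ => ?_⟩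
  have hA : A ≤ δ ^ (-ε) :=
    calc A ≤ max A 1 := le_max_left _ _
      _ = (max A 1 ^ (-ε⁻¹)) ^ (-ε) := by
          rw [← Real.rpow_mul (by positivity), neg_mul_neg, inv_mul_cancel₀ hε.ne', Real.rpow_one]
      _ ≤ δ ^ (-ε) := Real.rpow_le_rpow_of_nonpos hδ hδ₀.le (by linarith)
  rw [sub_eq_add_neg, Real.rpow_add hδ, mul_comm (δ ^ α)]
  exact mul_le_mul_of_nonneg_right hA (by positivity)

theorem le_abs_det_sub_of_mem_closedBall {d : ℕ} {c : ℝ} {b x : Fin (d + 1) → Euc d}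
    (hdet : ∀ y : Fin (d + 1) → Euc d, (∀ j, y j ∈ closedBall (b j) 1) →
      c ≤ |Matrix.det (Matrix.of fun i j : Fin d => (y j.succ - y 0) i)|)
    (hx : ∀ j : Fin (d + 1), j ≠ 0 → x j ∈ closedBall (b j) 1)
    {y : Euc d} (hy : y ∈ closedBall (b 0) 1) :
    c ≤ |(Matrix.of fun i j : Fin d => (x j.succ - y) i).det| :=
  hdet (Fin.cons y (Fin.tail x)) (Fin.cases hy fun j => hx j.succ j.succ_ne_zero)

/-- **Tube bound in the pinned setup (Lemma 2.2).** Any `δ`-tube meets `F` in measure at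
most `δ^(d - 1/2 - Kε)`. -/
theorem pinned_tube_bound (d : ℕ) (hd : 2 ≤ d) (c C : ℝ) (hc : 0 < c) (hC : 1 ≤ C) :
    ∃ K : ℝ, 1 ≤ K ∧ ∃ ε₀ : ℝ, 0 < ε₀ ∧ ∀ ε : ℝ, 0 < ε → ε < ε₀ →
      ∃ δ₀ : ℝ, 0 < δ₀ ∧ ∀ δ : ℝ, 0 < δ → δ < δ₀ →
      ∀ (b : Fin (d + 1) → Euc d) (D : Set ℝ) (x : Fin (d + 1) → Euc d) (F : Set (Euc d)),
        (∀ y : Fin (d + 1) → Euc d, (∀ j, y j ∈ closedBall (b j) 1) →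
          c ≤ |Matrix.det (Matrix.of fun i j : Fin d => (y j.succ - y 0) i)| ∧
          |Matrix.det (Matrix.of fun i j : Fin d => (y j.succ - y 0) i)| ≤ C) →
        D ⊆ Icc 0 C →
        IsDeltaRhoSet1 δ (1 / 2) C D →
        (∀ j : Fin (d + 1), j ≠ 0 → x j ∈ closedBall (b j) 1) →
        F ⊆ closedBall (b 0) 1 →
        MeasurableSet F →
        (∀ y ∈ F, ∀ j : Fin (d + 1), j ≠ 0 → dist y (x j) ∈ D) →
        ∀ a v : Euc d, v ≠ 0 →
          volume (Tube δ a v ∩ F) ≤ ENNReal.ofReal (δ ^ ((d : ℝ) - 1 / 2 - K * ε)) := by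
  obtain ⟨m, rfl⟩ : ∃ m, d = m + 1 := ⟨d - 1, by omega⟩
  set K₀ := 2 * (m + 1) * ((m + 1)! * C ^ (m + 1) / c)
  refine ⟨1, le_rfl, 1, one_pos, fun ε hε _ => ?_⟩
  obtain ⟨δ₁, hδ₁, hδ₁A⟩ := exists_pos_forall_mul_rpow_le_rpow_sub
    (K₀ * (C * (C / 2) ^ (1 / 2 : ℝ)) * 2 ^ m) (m + 1 / 2) hε
  refine ⟨min δ₁ (C / 2), by positivity,
    fun δ hδ hδlt b D x F hdet hD hDδ hx hFb hFm hFD a v hv => ?_⟩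
  have hvolD := hDδ.volume_le_of_subset_Icc hD (hδlt.le.trans (min_le_right _ _))
  calc volume (Tube δ a v ∩ F)
      ≤ ENNReal.ofReal K₀ * volume D * ENNReal.ofReal ((2 * δ) ^ m) :=
        volume_tube_inter_le_of_le_abs_det (by positivity) hc (fun j => x j.succ)
          (fun _ hy => (hD hy).2) hFm (fun y hy j => hFD y hy j.succ j.succ_ne_zero)
          (fun y hy => le_abs_det_sub_of_mem_closedBall (fun y hy => (hdet y hy).1) hx (hFb hy))
          a v hv hδ.le
    _ ≤ ENNReal.ofReal K₀ * ENNReal.ofReal (C * δ ^ (1 - 1 / 2 : ℝ) * (C / 2) ^ (1 / 2 : ℝ))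
          * ENNReal.ofReal ((2 * δ) ^ m) := by gcongr
    _ = ENNReal.ofReal (K₀ * (C * (C / 2) ^ (1 / 2 : ℝ)) * 2 ^ m * δ ^ ((m : ℝ) + 1 / 2)) := by
        rw [← ENNReal.ofReal_mul (by positivity), ← ENNReal.ofReal_mul (by positivity),
          Real.rpow_add hδ, Real.rpow_natCast, mul_pow]
        ring_nf
    _ ≤ ENNReal.ofReal (δ ^ (((m + 1 : ℕ) : ℝ) - 1 / 2 - 1 * ε)) := by
        refine ENNReal.ofReal_le_ofReal ((hδ₁A δ hδ (hδlt.trans_le (min_le_left _ _))).trans_eq ?_)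
        push_cast
        ring_nf
end
end
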